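/- Let γ be a nonempty word over the alphabet {L, M, R} and let t ≥ 1 be an integer. If there exists a word δ such that (γγ̄)^t γ (γ̄γ)^t = δδ̄, then |γ| is even and there exists a word λ with γ = λλ̄. -/

import Mathlib

/-- The three-letter alphabet {L, M, R}. -/
inductive Letter : Type
  | L | M | R
deriving DecidableEq, Repr

/-- Complementation on letters: R̄ = L, L̄ = R, M̄ = M. -/
def Letter.bar : Letter → Letter
  | .L => .R
  | .M => .M
  | .R => .L

/-- Complement of a word (letterwise). -/
def comp (w : List Letter) : List Letter := w.map Letter.bar

/-- k-fold concatenation of a word with itself. -/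
def npow (w : List Letter) : ℕ → List Letter
  | 0 => []
  | n + 1 => w ++ npow w n

/-! The word `W = (γγ̄)ᵗ γ (γ̄γ)ᵗ` has length `(4t + 1)|γ|`, so `W = δδ̄` forces `|γ| = 2m`, and the
midpoint of `W` splits the central `γ` as `λμ` with `|λ| = |μ| = m`. Then `δ̄` begins with `μ`, while `δ`
begins with `λ` just as `W` does; hence `μ = λ̄`. -/

lemma length_comp (w : List Letter) : (comp w).length = w.length :=
  List.length_map _

lemma length_npow (w : List Letter) (k : ℕ) : (npow w k).length = k * w.length := by
  induction k with
  | zero => simp [npow]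
  | succ k ih => simp [npow, ih, Nat.succ_mul, Nat.add_comm]

lemma prefix_npow_append_of_prefix {u v : List Letter} (h : u <+: v) (k : ℕ) :
    u <+: npow v k ++ u := by
  cases k with
  | zero => exact List.prefix_refl u
  | succ k => exact h.trans (by simp [npow, List.append_assoc])

lemma eq_comp_of_append_comp_eq {δ x lam μ v : List Letter} (h : δ ++ comp δ = x ++ μ ++ v)
    (hx : x.length = δ.length) (hlam : lam <+: x) (hμ : μ.length = lam.length) :
    μ = comp lam := by
  obtain ⟨rfl, hcomp⟩ := List.append_inj (h.trans (List.append_assoc _ _ _)) hx.symm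
  obtain ⟨w, hw⟩ : comp lam <+: μ ++ v := hcomp ▸ hlam.map Letter.bar
  exact (List.append_inj hw (by rw [length_comp, hμ])).1.symm

theorem stmt_12_general (γ : List Letter) (t : ℕ)
    (h : ∃ δ : List Letter,
      npow (γ ++ comp γ) t ++ γ ++ npow (comp γ ++ γ) t = δ ++ comp δ) :
    Even γ.length ∧ ∃ lam : List Letter, γ = lam ++ comp lam := by
  obtain ⟨δ, hδ⟩ := h
  have hlen := congrArg List.length hδ
  simp only [List.length_append, length_npow, length_comp] at hlen
  set m := γ.length / 2
  have hsplit : γ = γ.take m ++ γ.drop m := (List.take_append_drop m γ).symm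
  obtain ⟨lam, rfl⟩ : ∃ lam, γ = lam ++ comp lam := by
    refine ⟨γ.take m, hsplit.trans (congrArg _ (eq_comp_of_append_comp_eq (δ := δ)
      (x := npow (γ ++ comp γ) t ++ γ.take m) (v := npow (comp γ ++ γ) t) ?_ ?_ ?_ ?_))⟩
    · rw [← hδ, List.append_assoc _ (γ.take m), List.take_append_drop]
    · simp only [List.length_append, length_npow, length_comp, List.length_take]; omega
    · exact prefix_npow_append_of_prefix ((List.take_prefix m γ).trans (List.prefix_append γ _)) t
    · simp only [List.length_take, List.length_drop]; omega
  exact ⟨⟨lam.length, by rw [List.length_append, length_comp]⟩, lam, rfl⟩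

theorem stmt_12 (γ : List Letter) (hγ : γ ≠ []) (t : ℕ) (ht : 1 ≤ t)
    (h : ∃ δ : List Letter,
      npow (γ ++ comp γ) t ++ γ ++ npow (comp γ ++ γ) t = δ ++ comp δ) :
    Even γ.length ∧ ∃ lam : List Letter, γ = lam ++ comp lam :=
  stmt_12_general γ t h
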